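/- (Cordes inequality.) Let d ≥ 1, let A be a real symmetric d×d matrix with tr A > 0, let ε ∈ (0,1], and assume A satisfies the Cordes condition with parameter ε, i.e. ‖A‖_F² ≤ (tr A)²/(d−1+ε). Set γ := tr A/‖A‖_F². Then for every real d×d matrix M it holds that |γ·(A : M) − tr M| ≤ √(1 − ε)·‖M‖_F. -/

import Mathlib

open Matrix
open scoped BigOperators

/-! With `F := γ A − 1` the left-hand side is the Frobenius pairing `F : M`, so by Cauchy–Schwarz it
suffices to show `‖F‖_F² ≤ 1 − ε`. Expanding, `‖F‖_F² = γ²‖A‖_F² − 2γ tr A + d = d − (tr A)²/‖A‖_F²`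
for the chosen `γ`, and the Cordes condition says precisely `(tr A)²/‖A‖_F² ≥ d − 1 + ε`. -/

namespace Matrix

variable {n : Type*} [Fintype n]

theorem abs_sum_sum_mul_le_sqrt_mul_sqrt (F M : Matrix n n ℝ) :
    |∑ j, ∑ k, F j k * M j k| ≤
      Real.sqrt (∑ j, ∑ k, F j k ^ 2) * Real.sqrt (∑ j, ∑ k, M j k ^ 2) := by
  have hCS := Finset.sum_mul_sq_le_sq_mul_sq Finset.univ
    (fun p : n × n => F p.1 p.2) (fun p : n × n => M p.1 p.2)
  simp only [Fintype.sum_prod_type] at hCS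
  rw [← Real.sqrt_mul (Finset.sum_nonneg fun j _ => Finset.sum_nonneg fun k _ => sq_nonneg (F j k))]
  exact Real.abs_le_sqrt hCS

theorem sum_sum_sq_pos_of_trace_pos {A : Matrix n n ℝ} (htr : 0 < A.trace) :
    0 < ∑ j, ∑ k, A j k ^ 2 := by
  obtain ⟨i, -, hi⟩ := Finset.exists_ne_zero_of_sum_ne_zero htr.ne'
  calc 0 < A i i ^ 2 := by positivity
    _ ≤ ∑ k, A i k ^ 2 :=
        Finset.single_le_sum (fun k _ => sq_nonneg (A i k)) (Finset.mem_univ i)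
    _ ≤ ∑ j, ∑ k, A j k ^ 2 :=
        Finset.single_le_sum (f := fun j => ∑ k, A j k ^ 2)
          (fun j _ => Finset.sum_nonneg fun k _ => sq_nonneg _) (Finset.mem_univ i)

variable [DecidableEq n]

theorem sum_sum_smul_sub_one_mul (γ : ℝ) (A M : Matrix n n ℝ) :
    ∑ j, ∑ k, (γ • A - 1) j k * M j k = γ * ∑ j, ∑ k, A j k * M j k - M.trace := by
  simp only [sub_apply, smul_apply, smul_eq_mul, one_apply, sub_mul, ite_mul, one_mul, zero_mul,
    Finset.sum_sub_distrib, Finset.sum_ite_eq, Finset.mem_univ, if_true, Finset.mul_sum, mul_assoc]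
  rfl

theorem sum_sum_sq_smul_sub_one (γ : ℝ) (A : Matrix n n ℝ) :
    ∑ j, ∑ k, (γ • A - 1) j k ^ 2 =
      γ ^ 2 * ∑ j, ∑ k, A j k ^ 2 - 2 * γ * A.trace + Fintype.card n := by
  have hexpand : ∀ j k, (γ • A - 1) j k ^ 2 =
      γ ^ 2 * A j k ^ 2 - 2 * γ * (if j = k then A j k else 0) + (if j = k then 1 else 0) := by
    intro j k
    by_cases hjk : j = k <;> simp [hjk] <;> ring
  simp only [hexpand, Finset.sum_add_distrib, Finset.sum_sub_distrib, ← Finset.mul_sum,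
    Finset.sum_ite_eq, Finset.mem_univ, if_true, Finset.sum_const, Finset.card_univ,
    nsmul_eq_mul, mul_one]
  rfl

end Matrix

theorem le_sq_div_of_le_sq_div {s t c : ℝ} (hs : 0 < s) (h : s ≤ t ^ 2 / c) : c ≤ t ^ 2 / s := by
  have hc : 0 < c := by
    by_contra! hc
    linarith [div_nonpos_of_nonneg_of_nonpos (sq_nonneg t) hc]
  rw [le_div_iff₀ hs, mul_comm]
  exact (le_div_iff₀ hc).1 h

theorem statement12_general
    (d : ℕ)
    (A : Matrix (Fin d) (Fin d) ℝ) (htr : 0 < A.trace)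
    (ε : ℝ)
    (hCordes : (∑ j : Fin d, ∑ k : Fin d, A j k ^ 2) ≤
      A.trace ^ 2 / ((d : ℝ) - 1 + ε))
    (γ : ℝ) (hγ : γ = A.trace / ∑ j : Fin d, ∑ k : Fin d, A j k ^ 2) :
    ∀ M : Matrix (Fin d) (Fin d) ℝ,
      |γ * (∑ j : Fin d, ∑ k : Fin d, A j k * M j k) - M.trace| ≤
        Real.sqrt (1 - ε) * Real.sqrt (∑ j : Fin d, ∑ k : Fin d, M j k ^ 2) := by
  intro M
  have hs := sum_sum_sq_pos_of_trace_pos htr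
  have hc := le_sq_div_of_le_sq_div hs hCordes
  have hF : ∑ j, ∑ k, (γ • A - 1) j k ^ 2 ≤ 1 - ε := by
    have hγs : γ ^ 2 * (∑ j, ∑ k, A j k ^ 2) - 2 * γ * A.trace =
        -(A.trace ^ 2 / ∑ j, ∑ k, A j k ^ 2) := by
      rw [hγ]; field_simp; ring
    rw [sum_sum_sq_smul_sub_one, hγs, Fintype.card_fin]
    linarith
  rw [← sum_sum_smul_sub_one_mul]
  calc _ ≤ Real.sqrt (∑ j, ∑ k, (γ • A - 1) j k ^ 2) * Real.sqrt (∑ j, ∑ k, M j k ^ 2) :=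
        abs_sum_sum_mul_le_sqrt_mul_sqrt _ _
    _ ≤ _ := by gcongr

/-- the Cordes inequality
`|γ (A : M) − tr M| ≤ √(1−ε) ‖M‖_F`. -/
theorem statement12
    (d : ℕ) (hd : 1 ≤ d)
    (A : Matrix (Fin d) (Fin d) ℝ) (hA : A.IsSymm) (htr : 0 < A.trace)
    (ε : ℝ) (hε0 : 0 < ε) (hε1 : ε ≤ 1)
    (hCordes : (∑ j : Fin d, ∑ k : Fin d, A j k ^ 2) ≤
      A.trace ^ 2 / ((d : ℝ) - 1 + ε))
    (γ : ℝ) (hγ : γ = A.trace / ∑ j : Fin d, ∑ k : Fin d, A j k ^ 2) :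
    ∀ M : Matrix (Fin d) (Fin d) ℝ,
      |γ * (∑ j : Fin d, ∑ k : Fin d, A j k * M j k) - M.trace| ≤
        Real.sqrt (1 - ε) * Real.sqrt (∑ j : Fin d, ∑ k : Fin d, M j k ^ 2) :=
  statement12_general d A htr ε hCordes γ hγ
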